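/- For b = 2n even and l odd in ZMod b, the involution k ↦ l - k on ZMod b preserves exactly two edges of the cycle graph on ZMod b, namely {l', l'+1} and {l'+n, l'+n+1} where l = 2l'+1. -/
import Mathlib

lemma aux_two_mul_eq_zero (n : ℕ) (hn : 1 ≤ n) (x : ZMod (2*n)) (h : 2 * x = 0) :
    x = 0 ∨ x = (n : ZMod (2*n)) := by
  haveI : NeZero (2*n) := ⟨by omega⟩
  have hx : ((x.val : ℕ) : ZMod (2*n)) = x := by rw [ZMod.natCast_val, ZMod.cast_id]
  have h2 : ((2 * x.val : ℕ) : ZMod (2*n)) = 0 := by push_cast [hx]; exact h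
  have hdvd : (2*n) ∣ 2 * x.val := (ZMod.natCast_eq_zero_iff _ _).mp h2
  have hlt : x.val < 2*n := ZMod.val_lt x
  obtain ⟨c, hc⟩ := hdvd
  have : x.val = 0 ∨ x.val = n := by
    rcases Nat.lt_or_ge c 2 with hc2 | hc2
    · interval_cases c <;> omega
    · nlinarith
  rcases this with h' | h'
  · left; rw [← hx, h']; simp
  · right; rw [← hx, h']

lemma aux_two_mul_ne_one (n : ℕ) (x : ZMod (2*n)) (h : 2 * x = 1) : False := by
  have h2 : (2 : ℕ) ∣ 2*n := ⟨n, rfl⟩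
  have h3 := congrArg (ZMod.castHom h2 (ZMod 2)) h
  rw [map_mul, map_one, map_ofNat] at h3
  generalize (ZMod.castHom h2 (ZMod 2)) x = y at h3
  revert y h3; intro y; revert y; decide

theorem stmt_17 (n l' : ℕ) (hn : 1 ≤ n) :
    ∀ k : ZMod (2 * n),
      Sym2.map (fun x => (2 * l' + 1 : ZMod (2 * n)) - x) s(k, k + 1) = s(k, k + 1) ↔
        (s(k, k + 1) = s((l' : ZMod (2 * n)), (l' : ZMod (2 * n)) + 1) ∨
          s(k, k + 1) = s((l' : ZMod (2 * n)) + n, (l' : ZMod (2 * n)) + n + 1)) := by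
  haveI : NeZero (2*n) := ⟨by omega⟩
  haveI : Fact (1 < 2*n) := ⟨by omega⟩
  have h2n : (2 * (n : ZMod (2*n)) : ZMod (2*n)) = 0 := by
    have := ZMod.natCast_self (2*n); push_cast at this; exact this
  intro k
  have key : (k = (l' : ZMod (2*n)) ∨ k = (l' : ZMod (2*n)) + n) ↔
      2 * (k - (l' : ZMod (2*n))) = 0 := by
    constructor
    · rintro (h | h) <;> subst h
      · ring
      · linear_combination h2n
    · intro h
      rcases aux_two_mul_eq_zero n hn _ h with h' | h'
      · left; linear_combination h'
      · right; linear_combination h'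
  simp only [Sym2.map_pair_eq, Sym2.eq_iff]
  constructor
  · rintro (⟨h1, h2⟩ | ⟨h1, h2⟩)
    · exact absurd (show 2 * (k - (l':ZMod (2*n))) = 1 by linear_combination -h1)
        (fun h => aux_two_mul_ne_one n _ h)
    · rcases key.mpr (show 2 * (k - (l':ZMod (2*n))) = 0 by linear_combination -h1) with h' | h'
      · left; left; exact ⟨h', by rw [h']⟩
      · right; left; exact ⟨h', by rw [h']⟩
  · have htwo : ∀ h : (2 : ZMod (2*n)) = 0, (1 : ZMod (2*n)) = n := by
      intro h
      rcases aux_two_mul_eq_zero n hn 1 (by linear_combination h) with h' | h'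
      · exact absurd h' one_ne_zero
      · exact h'
    rintro ((⟨h1, h2⟩ | ⟨h1, h2⟩) | (⟨h1, h2⟩ | ⟨h1, h2⟩))
    · right; constructor <;> linear_combination -2*h1
    · have h0 : (2 : ZMod (2*n)) = 0 := by linear_combination h2 - h1
      right
      constructor <;> linear_combination -2*h1 - h0
    · right; constructor <;> linear_combination -2*h1 - h2n
    · have h0 : (2 : ZMod (2*n)) = 0 := by linear_combination h2 - h1
      right
      constructor <;> linear_combination -2*h1 - h2n - h0
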